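/- Let (P1, P2) ∈ Π(s1, t1) × Π(s2, t2) be a pair of shortest paths in the weighted DAG G, and let x, y be vertices such that x precedes y on both P1 and P2. Then every edge of the subpath P1[x, y] and every edge of the subpath P2[x, y] belongs to E_∩ = E(s1, t1) ∩ E(s2, t2). -/

import Mathlib

/-! In a DAG every walk is a path, so replacing the segment `p[x, y]` of an `s`–`t` path `p` by
any `x`–`y` path `q` gives an `s`–`t` path of weight `w p - w p[x, y] + w q`, containing the edges
of `q`. For a shortest `p` this shows that `p[x, y]` is a shortest `x`–`y` path; hence `P1[x, y]`
and `P2[x, y]` have the same weight, and splicing either of them into `P1` or `P2` yields a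
shortest path through its edges. -/

open scoped BigOperators

namespace DSP

variable {V : Type*} [Fintype V] [DecidableEq V]

/-- A path: a nonempty list of distinct vertices in which each consecutive
pair is joined by a directed edge. -/
def IsPath (E : V → V → Prop) (p : List V) : Prop :=
  p ≠ [] ∧ p.Nodup ∧ p.Chain' E

/-- A path from `x` to `y`. -/
def IsPathFrom (E : V → V → Prop) (p : List V) (x y : V) : Prop :=
  IsPath E p ∧ p.head? = some x ∧ p.getLast? = some y

/-- The (ordered) list of edges of a path. -/
def pathEdges (p : List V) : List (V × V) := p.zip p.tail

/-- The weight of a path: the sum of its edge weights. -/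
def pathWeight (ℓ : V → V → ℝ) (p : List V) : ℝ :=
  ((pathEdges p).map fun e => ℓ e.1 e.2).sum

/-- `dist x y` : the minimum weight of a path from `x` to `y`
(`⊤` if there is no such path). -/
noncomputable def dist (E : V → V → Prop) (ℓ : V → V → ℝ) (x y : V) : EReal :=
  sInf {w : EReal | ∃ p : List V, IsPathFrom E p x y ∧ (pathWeight ℓ p : EReal) = w}

/-- A shortest path from `x` to `y` : a path from `x` to `y` whose weight
equals `dist x y`.  `Π(x, y)` is the set of all such paths. -/
def IsShortestPath (E : V → V → Prop) (ℓ : V → V → ℝ) (p : List V) (x y : V) : Prop :=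
  IsPathFrom E p x y ∧ (pathWeight ℓ p : EReal) = dist E ℓ x y

/-- A directed cycle: a closed walk with at least one edge whose internal
vertices are pairwise distinct. -/
def IsCycle (E : V → V → Prop) (p : List V) : Prop :=
  2 ≤ p.length ∧ p.Chain' E ∧ p.head? = p.getLast? ∧ p.tail.Nodup

/-- `G` contains no directed cycle of negative or zero total weight. -/
def NoNonposCycle (E : V → V → Prop) (ℓ : V → V → ℝ) : Prop :=
  ∀ p : List V, IsCycle E p → 0 < pathWeight ℓ p

/-- `G` is a DAG: it contains no directed cycle. -/
def Acyclic (E : V → V → Prop) : Prop :=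
  ∀ p : List V, ¬ IsCycle E p

/-- `x` precedes `y` on the path `p` (`x = y` allowed). -/
def Precedes (p : List V) (x y : V) : Prop :=
  x ∈ p ∧ y ∈ p ∧ p.idxOf x ≤ p.idxOf y

/-- `subpath p x y` : the subpath `p[x, y]` of `p` from `x` to `y`
(for `x` preceding `y` on `p`). -/
def subpath (p : List V) (x y : V) : List V :=
  (p.take (p.idxOf y + 1)).drop (p.idxOf x)

/-- Concatenation `p · q` of two paths (the last vertex of `p` coinciding
with the first vertex of `q`). -/
def pathConcat (p q : List V) : List V := p ++ q.tail

/-- A vertex is internal to a path if it lies on it and is not an endpoint. -/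
def Internal (p : List V) (v : V) : Prop :=
  v ∈ p ∧ p.head? ≠ some v ∧ p.getLast? ≠ some v

/-- Paths `p1` from `x1` to `y1` and `p2` from `x2` to `y2` are internally
vertex-disjoint: they share no vertices except possibly those in
`{x1, y1} ∩ {x2, y2}`. -/
def InternallyDisjoint (p1 : List V) (x1 y1 : V) (p2 : List V) (x2 y2 : V) : Prop :=
  ∀ u, u ∈ p1 → u ∈ p2 → u ∈ ({x1, y1} ∩ {x2, y2} : Set V)

/-- `(a, b)` is a twin-crossing pair for paths `p1`, `p2`. -/
def TwinCrossingPair (p1 p2 : List V) (a b : V) : Prop :=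
  a ≠ b ∧ Precedes p1 a b ∧ Precedes p2 a b ∧ subpath p1 a b ≠ subpath p2 a b

/-- The swap operation `φ_{a,b}(P1, P2)`. -/
def swap (p1 : List V) (x1 y1 : V) (p2 : List V) (x2 y2 : V) (a b : V) :
    List V × List V :=
  (pathConcat (pathConcat (subpath p1 x1 a) (subpath p2 a b)) (subpath p1 b y1),
   pathConcat (pathConcat (subpath p2 x2 a) (subpath p1 a b)) (subpath p2 b y2))

/-- The graph with vertex `u` deleted. -/
def deleteVertex (E : V → V → Prop) (u : V) : V → V → Prop :=
  fun a b => E a b ∧ a ≠ u ∧ b ≠ u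

/-- `u` is distance-critical for `(x, y)` : deleting `u` strictly increases
the distance from `x` to `y`. -/
def DistCritical (E : V → V → Prop) (ℓ : V → V → ℝ) (x y u : V) : Prop :=
  dist E ℓ x y < dist (deleteVertex E u) ℓ x y

/-- `Δ(x, y)` : the distance-critical vertices for `(x, y)` together with the
endpoints `x`, `y`. -/
def Delta (E : V → V → Prop) (ℓ : V → V → ℝ) (x y : V) : Set V :=
  {u | DistCritical E ℓ x y u} ∪ {x, y}

/-- `δ(x, y) = |Δ(x, y)|`. -/
noncomputable def deltaCard (E : V → V → Prop) (ℓ : V → V → ℝ) (x y : V) : ℕ :=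
  (Delta E ℓ x y).ncard

/-- `(a, b)` is a concordant pair for paths `p1` (from `x1` to `y1`) and
`p2` (from `x2` to `y2`). -/
def ConcordantPair (p1 : List V) (x1 y1 : V) (p2 : List V) (x2 y2 : V) (a b : V) : Prop :=
  a ∉ ({x1, y1} ∩ {x2, y2} : Set V) ∧ b ∉ ({x1, y1} ∩ {x2, y2} : Set V) ∧
  Precedes p1 a b ∧ Precedes p2 a b ∧
  InternallyDisjoint (subpath p1 x1 a) x1 a (subpath p2 x2 a) x2 a ∧
  InternallyDisjoint (subpath p1 b y1) b y1 (subpath p2 b y2) b y2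

/-- `𝒞(P1, P2)` : the set of concordant pairs for `(P1, P2)`. -/
def concordantSet (p1 : List V) (x1 y1 : V) (p2 : List V) (x2 y2 : V) : Set (V × V) :=
  {c | ConcordantPair p1 x1 y1 p2 x2 y2 c.1 c.2}

/-- The interaction complexity `γ(P1, P2) = Σ_{(v,w) ∈ 𝒞(P1,P2)} δ(v, w)`. -/
noncomputable def gamma (E : V → V → Prop) (ℓ : V → V → ℝ)
    (p1 : List V) (x1 y1 : V) (p2 : List V) (x2 y2 : V) : ℕ :=
  ∑ᶠ c ∈ concordantSet p1 x1 y1 p2 x2 y2, deltaCard E ℓ c.1 c.2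

/-- `E(x, y)` : the set of edges lying on at least one shortest path
from `x` to `y`. -/
def shortestEdges (E : V → V → Prop) (ℓ : V → V → ℝ) (x y : V) : Set (V × V) :=
  {e | ∃ p : List V, IsShortestPath E ℓ p x y ∧ e ∈ pathEdges p}

section Poly

variable (F : Type*) [Field F] [CharP F 2]

/-- The monomial `f(P) = ∏_{e ∈ E(P)} z_e` of a path. -/
noncomputable def pathMon (p : List V) : MvPolynomial (V × V) F :=
  ((pathEdges p).map fun e => MvPolynomial.X e).prod

/-- The enumerating polynomial of a collection of paths. -/
noncomputable def enumPoly (S : Set (List V)) : MvPolynomial (V × V) F :=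
  ∑ᶠ p ∈ S, pathMon F p

/-- The enumerating polynomial of a collection of pairs of paths. -/
noncomputable def enumPoly2 (S : Set (List V × List V)) : MvPolynomial (V × V) F :=
  ∑ᶠ q ∈ S, pathMon F q.1 * pathMon F q.2

variable (E : V → V → Prop) (ℓ : V → V → ℝ)

/-- `F(x, y)` : the enumerating polynomial of `Π(x, y)`. -/
noncomputable def Fpoly (x y : V) : MvPolynomial (V × V) F :=
  enumPoly F {p : List V | IsShortestPath E ℓ p x y}

end Poly

variable (E : V → V → Prop) (ℓ : V → V → ℝ)

/-- The collection of internally vertex-disjoint pairs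
`(P1, P2) ∈ Π(x1, y1) × Π(x2, y2)`. -/
def disjPairs (x1 y1 x2 y2 : V) : Set (List V × List V) :=
  {q | IsShortestPath E ℓ q.1 x1 y1 ∧ IsShortestPath E ℓ q.2 x2 y2 ∧
       InternallyDisjoint q.1 x1 y1 q.2 x2 y2}

/-- Pairs `(P1, P2) ∈ Π(x1, y1) × Π(x2, y2)` such that `v ∈ V(P1) ∩ V(P2)`
and the prefix `P1[x1, v]` and the suffix `P2[v, y2]` are internally
vertex-disjoint (defining `H_v`). -/
def HvPairs (v x1 y1 x2 y2 : V) : Set (List V × List V) :=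
  {q | IsShortestPath E ℓ q.1 x1 y1 ∧ IsShortestPath E ℓ q.2 x2 y2 ∧
       v ∈ q.1 ∧ v ∈ q.2 ∧
       InternallyDisjoint (subpath q.1 x1 v) x1 v (subpath q.2 v y2) v y2}

/-- Pairs `(P1, P2) ∈ Π(x1, y1) × Π(x2, y2)` such that
`(a, v) ∈ E(P1) ∩ E(P2)` and the prefix `P1[x1, a]` and the suffix
`P2[v, y2]` are internally vertex-disjoint (defining `H_{av}`). -/
def HavPairs (a v x1 y1 x2 y2 : V) : Set (List V × List V) :=
  {q | IsShortestPath E ℓ q.1 x1 y1 ∧ IsShortestPath E ℓ q.2 x2 y2 ∧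
       (a, v) ∈ pathEdges q.1 ∧ (a, v) ∈ pathEdges q.2 ∧
       InternallyDisjoint (subpath q.1 x1 a) x1 a (subpath q.2 v y2) v y2}

/-- Pairs `(P1, P2) ∈ Π(x1, y1) × Π(x2, y2)` such that `v ∈ V(P1) ∩ V(P2)`
and the prefix `P1[x1, v]` is internally vertex-disjoint from both
`P2[x2, v]` and `P2[v, y2]` (defining `D_v`). -/
def DvPairs (v x1 y1 x2 y2 : V) : Set (List V × List V) :=
  {q | IsShortestPath E ℓ q.1 x1 y1 ∧ IsShortestPath E ℓ q.2 x2 y2 ∧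
       v ∈ q.1 ∧ v ∈ q.2 ∧
       InternallyDisjoint (subpath q.1 x1 v) x1 v (subpath q.2 x2 v) x2 v ∧
       InternallyDisjoint (subpath q.1 x1 v) x1 v (subpath q.2 v y2) v y2}

/-- Pairs `(P1, P2) ∈ Π(x1, y1) × Π(x2, y2)` with interaction complexity
`γ(P1, P2) ≤ k` (defining `F_{disj,k}`). -/
def disjkPairs (k : ℤ) (x1 y1 x2 y2 : V) : Set (List V × List V) :=
  {q | IsShortestPath E ℓ q.1 x1 y1 ∧ IsShortestPath E ℓ q.2 x2 y2 ∧
       (gamma E ℓ q.1 x1 y1 q.2 x2 y2 : ℤ) ≤ k}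

/-- Pairs `(P1, P2) ∈ Π(x1, y1) × Π(x2, y2)` with `γ(P1, P2) ≤ k` such that
`(v, w) ∈ 𝒞(P1, P2)` and `(v, w)` is the concordant pair appearing first
along `P1` (defining `D_{v,w,k}`). -/
def DvwkPairs (k : ℤ) (v w x1 y1 x2 y2 : V) : Set (List V × List V) :=
  {q | IsShortestPath E ℓ q.1 x1 y1 ∧ IsShortestPath E ℓ q.2 x2 y2 ∧
       (gamma E ℓ q.1 x1 y1 q.2 x2 y2 : ℤ) ≤ k ∧
       (v, w) ∈ concordantSet q.1 x1 y1 q.2 x2 y2 ∧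
       ∀ c ∈ concordantSet q.1 x1 y1 q.2 x2 y2, q.1.idxOf v ≤ q.1.idxOf c.1}

/-- Pairs `(P1, P2) ∈ Π(x1, y1) × Π(x2, y2)` such that `v` and `w` lie on
both paths with `v` preceding `w` on both, the subpaths `P1[x1, v]` and
`P2[w, y2]` are internally vertex-disjoint, and
`γ(P1[v, y1], P2[x2, w]) ≤ k` (defining `H_{v,w,k}`). -/
def HvwkPairs (k : ℤ) (v w x1 y1 x2 y2 : V) : Set (List V × List V) :=
  {q | IsShortestPath E ℓ q.1 x1 y1 ∧ IsShortestPath E ℓ q.2 x2 y2 ∧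
       Precedes q.1 v w ∧ Precedes q.2 v w ∧
       InternallyDisjoint (subpath q.1 x1 v) x1 v (subpath q.2 w y2) w y2 ∧
       (gamma E ℓ (subpath q.1 v y1) v y1 (subpath q.2 x2 w) x2 w : ℤ) ≤ k}

/-- As `HvwkPairs`, additionally requiring the edge `(a, v)` on both paths
(disjointness imposed on `P1[x1, a]` and `P2[w, y2]`), defining `H_{av,w,k}`. -/
def HavwkPairs (k : ℤ) (a v w x1 y1 x2 y2 : V) : Set (List V × List V) :=
  {q | IsShortestPath E ℓ q.1 x1 y1 ∧ IsShortestPath E ℓ q.2 x2 y2 ∧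
       Precedes q.1 v w ∧ Precedes q.2 v w ∧
       (a, v) ∈ pathEdges q.1 ∧ (a, v) ∈ pathEdges q.2 ∧
       InternallyDisjoint (subpath q.1 x1 a) x1 a (subpath q.2 w y2) w y2 ∧
       (gamma E ℓ (subpath q.1 v y1) v y1 (subpath q.2 x2 w) x2 w : ℤ) ≤ k}

/-- As `HvwkPairs`, additionally requiring the edge `(w, b)` on both paths
(disjointness imposed on `P1[x1, v]` and `P2[b, y2]`), defining `H_{v,wb,k}`. -/
def HvwbkPairs (k : ℤ) (v w b x1 y1 x2 y2 : V) : Set (List V × List V) :=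
  {q | IsShortestPath E ℓ q.1 x1 y1 ∧ IsShortestPath E ℓ q.2 x2 y2 ∧
       Precedes q.1 v w ∧ Precedes q.2 v w ∧
       (w, b) ∈ pathEdges q.1 ∧ (w, b) ∈ pathEdges q.2 ∧
       InternallyDisjoint (subpath q.1 x1 v) x1 v (subpath q.2 b y2) b y2 ∧
       (gamma E ℓ (subpath q.1 v y1) v y1 (subpath q.2 x2 w) x2 w : ℤ) ≤ k}

/-- As `HvwkPairs`, additionally requiring both edges `(a, v)` and `(w, b)`
on both paths (disjointness imposed on `P1[x1, a]` and `P2[b, y2]`),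
defining `H_{av,wb,k}`. -/
def HavwbkPairs (k : ℤ) (a v w b x1 y1 x2 y2 : V) : Set (List V × List V) :=
  {q | IsShortestPath E ℓ q.1 x1 y1 ∧ IsShortestPath E ℓ q.2 x2 y2 ∧
       Precedes q.1 v w ∧ Precedes q.2 v w ∧
       (a, v) ∈ pathEdges q.1 ∧ (a, v) ∈ pathEdges q.2 ∧
       (w, b) ∈ pathEdges q.1 ∧ (w, b) ∈ pathEdges q.2 ∧
       InternallyDisjoint (subpath q.1 x1 a) x1 a (subpath q.2 b y2) b y2 ∧
       (gamma E ℓ (subpath q.1 v y1) v y1 (subpath q.2 x2 w) x2 w : ℤ) ≤ k}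

section Walks

variable {α : Type*} {G : α → α → Prop} {w : α → α → ℝ}

theorem Acyclic.nodup_of_isChain (hG : Acyclic G) : ∀ {l : List α}, l.IsChain G → l.Nodup
  | [], _ => List.nodup_nil
  | a :: t, h => by
    have ht : t.Nodup := hG.nodup_of_isChain h.tail
    refine List.nodup_cons.2 ⟨fun ha => ?_, ht⟩
    obtain ⟨k, hk, rfl⟩ := List.getElem_of_mem ha
    -- a repeated vertex `t[k]` closes the walk `t[k] :: t.take (k + 1)` into a cycle
    refine hG (t[k] :: t.take (k + 1))
      ⟨?_, h.take (k + 2), ?_, (List.take_sublist _ _).nodup ht⟩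
    · simp only [List.length_cons, List.length_take]; omega
    · simp [List.getLast?_cons, List.getLast?_take, List.getElem?_eq_getElem hk]

theorem pathEdges_append_cons (l₁ : List α) (c : α) (l₂ : List α) :
    pathEdges (l₁ ++ c :: l₂) = pathEdges (l₁ ++ [c]) ++ pathEdges (c :: l₂) := by
  induction l₁ with
  | nil => rfl
  | cons a l₁ ih =>
    cases l₁ with
    | nil => rfl
    | cons b l₁ => exact congrArg ((a, b) :: ·) ih

theorem pathConcat_append_singleton (u v : List α) (b : α) :
    pathConcat (u ++ [b]) (b :: v) = u ++ b :: v := by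
  simp [pathConcat]

theorem pathEdges_pathConcat {u v : List α} {b : α} (hu : u.getLast? = some b)
    (hv : v.head? = some b) : pathEdges (pathConcat u v) = pathEdges u ++ pathEdges v := by
  obtain ⟨u', rfl⟩ := List.getLast?_eq_some_iff.1 hu
  obtain ⟨v', rfl⟩ := List.head?_eq_some_iff.1 hv
  rw [pathConcat_append_singleton, pathEdges_append_cons]

theorem pathWeight_pathConcat {u v : List α} {b : α} (hu : u.getLast? = some b)
    (hv : v.head? = some b) : pathWeight w (pathConcat u v) = pathWeight w u + pathWeight w v := by
  simp only [pathWeight, pathEdges_pathConcat hu hv, List.map_append, List.sum_append]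

theorem Acyclic.isPathFrom_pathConcat (hG : Acyclic G) {u v : List α} {a b c : α}
    (hu : IsPathFrom G u a b) (hv : IsPathFrom G v b c) : IsPathFrom G (pathConcat u v) a c := by
  obtain ⟨⟨-, -, hcu⟩, hau, hbu⟩ := hu
  obtain ⟨⟨-, -, hcv⟩, hbv, hcv'⟩ := hv
  obtain ⟨u', rfl⟩ := List.getLast?_eq_some_iff.1 hbu
  obtain ⟨v', rfl⟩ := List.head?_eq_some_iff.1 hbv
  rw [pathConcat_append_singleton]
  have hc : (u' ++ b :: v').IsChain G := List.isChain_split.2 ⟨hcu, hcv⟩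
  refine ⟨⟨by simp, hG.nodup_of_isChain hc, hc⟩, ?_, ?_⟩
  · simpa [List.head?_append] using hau
  · simpa [List.getLast?_append] using hcv'

theorem IsPath.isPathFrom_drop_take {p : List α} (hp : IsPath G p) {i j : ℕ} (hij : i ≤ j)
    (hj : j < p.length) : IsPathFrom G ((p.take (j + 1)).drop i) p[i] p[j] := by
  obtain ⟨-, hnd, hc⟩ := hp
  refine ⟨⟨?_, ((List.drop_sublist _ _).trans (List.take_sublist _ _)).nodup hnd,
    (hc.take _).drop _⟩, ?_, ?_⟩
  · simp only [ne_eq, List.drop_eq_nil_iff, List.length_take]; omega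
  · simp [List.head?_drop, hij]
  · simp [List.getLast?_drop, List.getLast?_take, hij, hj]

theorem IsShortestPath.pathWeight_le {p q : List α} {s t : α} (hp : IsShortestPath G w p s t)
    (hq : IsPathFrom G q s t) : pathWeight w p ≤ pathWeight w q :=
  EReal.coe_le_coe_iff.1 (hp.2 ▸ sInf_le ⟨q, hq, rfl⟩)

theorem IsShortestPath.of_pathWeight_le {p q : List α} {s t : α} (hp : IsShortestPath G w p s t)
    (hq : IsPathFrom G q s t) (hle : pathWeight w q ≤ pathWeight w p) :
    IsShortestPath G w q s t :=
  ⟨hq, le_antisymm (hp.2 ▸ EReal.coe_le_coe_iff.2 hle) (sInf_le ⟨q, hq, rfl⟩)⟩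

section Subpath

variable [DecidableEq α]

theorem IsPath.isPathFrom_subpath {p : List α} (hp : IsPath G p) {x y : α}
    (hxy : Precedes p x y) : IsPathFrom G (subpath p x y) x y := by
  obtain ⟨hx, hy, hij⟩ := hxy
  simpa [subpath] using hp.isPathFrom_drop_take hij (List.idxOf_lt_length_iff.2 hy)

theorem IsPathFrom.exists_eq_pathConcat_subpath {p : List α} {s t x y : α}
    (hp : IsPathFrom G p s t) (hxy : Precedes p x y) :
    ∃ A C, IsPathFrom G A s x ∧ IsPathFrom G C y t ∧
      p = pathConcat (pathConcat A (subpath p x y)) C := by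
  obtain ⟨hx, hy, hij⟩ := hxy
  set i := p.idxOf x
  set j := p.idxOf y
  have hi : i < p.length := List.idxOf_lt_length_iff.2 hx
  have hj : j < p.length := List.idxOf_lt_length_iff.2 hy
  have hs : p[0] = s := (List.getElem?_eq_some_iff.1 (List.head?_eq_getElem? ▸ hp.2.1)).2
  have ht : p[p.length - 1] = t :=
    (List.getElem?_eq_some_iff.1 (List.getLast?_eq_getElem? ▸ hp.2.2)).2
  have hxi : p[i] = x := List.getElem_idxOf hi
  have hyj : p[j] = y := List.getElem_idxOf hj
  refine ⟨p.take (i + 1), p.drop j, ?_, ?_, ?_⟩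
  · simpa [hs, hxi] using hp.1.isPathFrom_drop_take (Nat.zero_le i) hi
  · have := hp.1.isPathFrom_drop_take (Nat.le_sub_one_of_lt hj) (Nat.sub_one_lt_of_lt hj)
    rwa [Nat.sub_add_cancel (by omega), List.take_length, hyj, ht] at this
  · calc p = (p.take (j + 1)).take (i + 1) ++ (p.take (j + 1)).drop (i + 1) ++ p.drop (j + 1) :=
          by rw [List.take_append_drop, List.take_append_drop]
      _ = _ := by
          simp only [pathConcat, subpath, List.tail_drop, List.take_take,
            Nat.min_eq_left (Nat.succ_le_succ hij), List.append_assoc]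
          rfl

theorem Acyclic.exists_splice (hG : Acyclic G) {p q : List α} {s t x y : α}
    (hp : IsPathFrom G p s t) (hxy : Precedes p x y) (hq : IsPathFrom G q x y) :
    ∃ Q, IsPathFrom G Q s t ∧ pathEdges q ⊆ pathEdges Q ∧
      pathWeight w Q + pathWeight w (subpath p x y) = pathWeight w p + pathWeight w q := by
  obtain ⟨A, C, hA, hC, hpeq⟩ := hp.exists_eq_pathConcat_subpath hxy
  have hB := hp.1.isPathFrom_subpath hxy
  have hAB := hG.isPathFrom_pathConcat hA hB
  have hAq := hG.isPathFrom_pathConcat hA hq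
  have hwp : pathWeight w p = pathWeight w A + pathWeight w (subpath p x y) + pathWeight w C := by
    conv_lhs => rw [hpeq]
    rw [pathWeight_pathConcat hAB.2.2 hC.2.1, pathWeight_pathConcat hA.2.2 hB.2.1]
  refine ⟨pathConcat (pathConcat A q) C, hG.isPathFrom_pathConcat hAq hC, ?_, ?_⟩
  · rw [pathEdges_pathConcat hAq.2.2 hC.2.1, pathEdges_pathConcat hA.2.2 hq.2.1]
    exact fun e he => List.mem_append_left _ (List.mem_append_right _ he)
  · rw [hwp, pathWeight_pathConcat hAq.2.2 hC.2.1, pathWeight_pathConcat hA.2.2 hq.2.1]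
    ring

theorem IsShortestPath.pathWeight_subpath_le (hG : Acyclic G) {p q : List α} {s t x y : α}
    (hp : IsShortestPath G w p s t) (hxy : Precedes p x y) (hq : IsPathFrom G q x y) :
    pathWeight w (subpath p x y) ≤ pathWeight w q := by
  obtain ⟨Q, hQ, -, hw⟩ := hG.exists_splice (w := w) hp.1 hxy hq
  linarith [hp.pathWeight_le hQ]

theorem IsShortestPath.mem_shortestEdges (hG : Acyclic G) {p q : List α} {s t x y : α}
    (hp : IsShortestPath G w p s t) (hxy : Precedes p x y) (hq : IsPathFrom G q x y)
    (hle : pathWeight w q ≤ pathWeight w (subpath p x y)) {e : α × α}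
    (he : e ∈ pathEdges q) : e ∈ shortestEdges G w s t := by
  obtain ⟨Q, hQ, hsub, hw⟩ := hG.exists_splice (w := w) hp.1 hxy hq
  exact ⟨Q, hp.of_pathWeight_le hQ (by linarith), hsub he⟩

end Subpath

end Walks

/-- In a weighted DAG, for `(P1, P2) ∈ Π(s1, t1) × Π(s2, t2)`
and vertices `x, y` with `x` preceding `y` on both paths, every edge of
`P1[x, y]` and of `P2[x, y]` lies in `E_∩ = E(s1, t1) ∩ E(s2, t2)`. -/
theorem subpath_edges_mem_inter
    (hdag : Acyclic E) (s1 t1 s2 t2 x y : V) (P1 P2 : List V)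
    (h1 : IsShortestPath E ℓ P1 s1 t1) (h2 : IsShortestPath E ℓ P2 s2 t2)
    (hx1 : Precedes P1 x y) (hx2 : Precedes P2 x y) :
    ∀ e : V × V,
      (e ∈ pathEdges (subpath P1 x y) ∨ e ∈ pathEdges (subpath P2 x y)) →
      e ∈ shortestEdges E ℓ s1 t1 ∩ shortestEdges E ℓ s2 t2 := by
  have hq1 := h1.1.1.isPathFrom_subpath hx1
  have hq2 := h2.1.1.isPathFrom_subpath hx2
  have h12 := h1.pathWeight_subpath_le hdag hx1 hq2
  have h21 := h2.pathWeight_subpath_le hdag hx2 hq1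
  rintro e (he | he)
  · exact ⟨h1.mem_shortestEdges hdag hx1 hq1 le_rfl he,
      h2.mem_shortestEdges hdag hx2 hq1 h12 he⟩
  · exact ⟨h1.mem_shortestEdges hdag hx1 hq2 h21 he,
      h2.mem_shortestEdges hdag hx2 hq2 le_rfl he⟩

end DSP
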